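/- Under the group generated by the maps ρ(v₁,…,v₅) = (v₁ − s₂v₃ + (s₃ − s₁s₂)v₄ − ½s₂²v₅, v₂ + s₁v₃ + ½s₁²v₄ + (s₃+s₁s₂)v₅, v₃ + s₁v₄ + s₂v₅, v₄, v₅) for s₁,s₂,s₃ ∈ ℝ, together with the graded GL₂-action, every nonzero vector v ∈ ℝ⁵ with (v₄,v₅) ≠ (0,0) and 2v₁v₅ − 2v₂v₄ + v₃² > 0 can be mapped to e₅ + e₁ = (1,0,0,0,1). -/

import Mathlib

/-!
The form `Q v = 2 v₁ v₅ - 2 v₂ v₄ + v₃²` is multiplied by `(det A)²` under the graded action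
of `A ∈ GL₂`. A rotation in `GL₂` moves `(v₄, v₅)` to `(0, r)` with `r > 0`, keeping `Q > 0`;
the unipotent `ρ(0, -v₃/v₅, -v₂/v₅)` then clears `v₂, v₃`, leaving `(Q/(2r), 0, 0, 0, r)` with
both entries positive, and a diagonal element of `GL₂` rescales this to `e₁ + e₅`.
-/

/-- The unipotent action of exp(𝔭₊) on 𝔪 ≅ ℝ⁵ (coordinates v₁,…,v₅ = indices 0,…,4). -/
noncomputable def rhoAct (s1 s2 s3 : ℝ) (v : Fin 5 → ℝ) : Fin 5 → ℝ :=
  ![v 0 - s2 * v 2 + (s3 - s1 * s2) * v 3 - (1/2) * s2^2 * v 4,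
    v 1 + s1 * v 2 + (1/2) * s1^2 * v 3 + (s3 + s1 * s2) * v 4,
    v 2 + s1 * v 3 + s2 * v 4,
    v 3,
    v 4]

/-- The graded GL₂-action on 𝔪 for A = [[a,b],[c,d]]. -/
noncomputable def glAct (a b c d : ℝ) (v : Fin 5 → ℝ) : Fin 5 → ℝ :=
  ![a * v 0 + b * v 1,
    c * v 0 + d * v 1,
    (a * d - b * c) * v 2,
    (a * d - b * c) * (a * v 3 + b * v 4),
    (a * d - b * c) * (c * v 3 + d * v 4)]

/-- The set of generators of the P₁-action: unipotent elements and GL₂ elements. -/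
noncomputable def P1gens : Set ((Fin 5 → ℝ) ≃ₗ[ℝ] (Fin 5 → ℝ)) :=
  {f | (∃ s1 s2 s3 : ℝ, ∀ v, f v = rhoAct s1 s2 s3 v) ∨
       (∃ a b c d : ℝ, a * d - b * c ≠ 0 ∧ ∀ v, f v = glAct a b c d v)}

lemma fin5_ext {v w : Fin 5 → ℝ} (h0 : v 0 = w 0) (h1 : v 1 = w 1) (h2 : v 2 = w 2)
    (h3 : v 3 = w 3) (h4 : v 4 = w 4) : v = w := by
  funext i; fin_cases i <;> assumption

lemma glAct_glAct (a b c d a' b' c' d' : ℝ) (v : Fin 5 → ℝ) :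
    glAct a b c d (glAct a' b' c' d' v) =
      glAct (a * a' + b * c') (a * b' + b * d') (c * a' + d * c') (c * b' + d * d') v := by
  refine fin5_ext ?_ ?_ ?_ ?_ ?_ <;> simp only [glAct, Matrix.cons_val] <;> ring

lemma glAct_one (v : Fin 5 → ℝ) : glAct 1 0 0 1 v = v := by
  refine fin5_ext ?_ ?_ ?_ ?_ ?_ <;> simp only [glAct, Matrix.cons_val] <;> ring

lemma glAct_glAct_inv (a b c d : ℝ) (h : a * d - b * c ≠ 0) (v : Fin 5 → ℝ) :
    glAct a b c d (glAct (d / (a * d - b * c)) (-b / (a * d - b * c)) (-c / (a * d - b * c))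
      (a / (a * d - b * c)) v) = v := by
  rw [glAct_glAct]
  -- the entries of `A A⁻¹` are `0` or `(ad - bc) / (ad - bc)`
  convert glAct_one v using 2 <;> first | ring1 | (rw [← div_self h]; ring1)

lemma glAct_inv_glAct (a b c d : ℝ) (h : a * d - b * c ≠ 0) (v : Fin 5 → ℝ) :
    glAct (d / (a * d - b * c)) (-b / (a * d - b * c)) (-c / (a * d - b * c))
      (a / (a * d - b * c)) (glAct a b c d v) = v := by
  rw [glAct_glAct]
  convert glAct_one v using 2 <;> first | ring1 | (rw [← div_self h]; ring1)

noncomputable def glEquiv (a b c d : ℝ) (h : a * d - b * c ≠ 0) :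
    (Fin 5 → ℝ) ≃ₗ[ℝ] (Fin 5 → ℝ) where
  toFun := glAct a b c d
  invFun := glAct (d / (a * d - b * c)) (-b / (a * d - b * c)) (-c / (a * d - b * c))
    (a / (a * d - b * c))
  map_add' x y := by
    refine fin5_ext ?_ ?_ ?_ ?_ ?_ <;> simp only [glAct, Matrix.cons_val, Pi.add_apply] <;> ring
  map_smul' c x := by
    refine fin5_ext ?_ ?_ ?_ ?_ ?_ <;>
      simp only [glAct, Matrix.cons_val, Pi.smul_apply, smul_eq_mul, RingHom.id_apply] <;> ring
  left_inv := glAct_inv_glAct a b c d h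
  right_inv := glAct_glAct_inv a b c d h

noncomputable def rhoEquiv (s1 s2 s3 : ℝ) : (Fin 5 → ℝ) ≃ₗ[ℝ] (Fin 5 → ℝ) where
  toFun := rhoAct s1 s2 s3
  invFun u := ![u 0 + s2 * u 2 - s3 * u 3 - (1/2) * s2^2 * u 4,
    u 1 - s1 * u 2 + (1/2) * s1^2 * u 3 - s3 * u 4,
    u 2 - s1 * u 3 - s2 * u 4,
    u 3,
    u 4]
  map_add' x y := by
    refine fin5_ext ?_ ?_ ?_ ?_ ?_ <;> simp only [rhoAct, Matrix.cons_val, Pi.add_apply] <;> ring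
  map_smul' c x := by
    refine fin5_ext ?_ ?_ ?_ ?_ ?_ <;>
      simp only [rhoAct, Matrix.cons_val, Pi.smul_apply, smul_eq_mul, RingHom.id_apply] <;> ring
  left_inv x := by refine fin5_ext ?_ ?_ ?_ ?_ ?_ <;> simp only [rhoAct, Matrix.cons_val] <;> ring
  right_inv x := by refine fin5_ext ?_ ?_ ?_ ?_ ?_ <;> simp only [rhoAct, Matrix.cons_val] <;> ring

def qform (v : Fin 5 → ℝ) : ℝ := 2 * v 0 * v 4 - 2 * v 1 * v 3 + (v 2)^2

lemma qform_glAct (a b c d : ℝ) (v : Fin 5 → ℝ) :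
    qform (glAct a b c d v) = (a * d - b * c) ^ 2 * qform v := by
  simp only [qform, glAct, Matrix.cons_val]; ring

def Reachable (v w : Fin 5 → ℝ) : Prop := ∃ f ∈ Subgroup.closure P1gens, f v = w

lemma Reachable.trans {u v w : Fin 5 → ℝ} (huv : Reachable u v) (hvw : Reachable v w) :
    Reachable u w := by
  obtain ⟨f, hf, rfl⟩ := huv
  obtain ⟨g, hg, rfl⟩ := hvw
  exact ⟨g * f, mul_mem hg hf, rfl⟩

lemma reachable_rhoAct (s1 s2 s3 : ℝ) (v : Fin 5 → ℝ) : Reachable v (rhoAct s1 s2 s3 v) :=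
  ⟨rhoEquiv s1 s2 s3, Subgroup.subset_closure (Or.inl ⟨s1, s2, s3, fun _ => rfl⟩), rfl⟩

lemma reachable_glAct {a b c d : ℝ} (h : a * d - b * c ≠ 0) (v : Fin 5 → ℝ) :
    Reachable v (glAct a b c d v) :=
  ⟨glEquiv a b c d h, Subgroup.subset_closure (Or.inr ⟨a, b, c, d, h, fun _ => rfl⟩), rfl⟩

lemma exists_reachable_coord3_eq_zero {v : Fin 5 → ℝ} (h45 : ¬ (v 3 = 0 ∧ v 4 = 0))
    (hQ : 0 < qform v) : ∃ w, Reachable v w ∧ w 3 = 0 ∧ 0 < w 4 ∧ 0 < qform w := by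
  have hΔ : 0 < v 3 ^ 2 + v 4 ^ 2 := by
    rcases not_and_or.mp h45 with h | h <;> have := sq_pos_iff.2 h <;> positivity
  have hdet : v 4 * v 4 - (-v 3) * v 3 = v 3 ^ 2 + v 4 ^ 2 := by ring
  -- the rotation `[[v₅, -v₄], [v₄, v₅]]` sends `(v₄, v₅)` to `(0, v₄² + v₅²)`
  refine ⟨_, reachable_glAct (hdet ▸ hΔ.ne') v, ?_, ?_, ?_⟩
  · simp only [glAct, Matrix.cons_val]; ring
  · have hw4 : glAct (v 4) (-v 3) (v 3) (v 4) v 4 = (v 3 ^ 2 + v 4 ^ 2) ^ 2 := by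
      simp only [glAct, Matrix.cons_val]; ring
    rw [hw4]; positivity
  · rw [qform_glAct, hdet]; positivity

lemma reachable_of_coord3_eq_zero {v : Fin 5 → ℝ} (h3 : v 3 = 0) (h4 : v 4 ≠ 0) :
    Reachable v ![qform v / (2 * v 4), 0, 0, 0, v 4] := by
  convert reachable_rhoAct 0 (-v 2 / v 4) (-v 1 / v 4) v using 1
  refine fin5_ext ?_ ?_ ?_ ?_ ?_ <;> simp only [rhoAct, qform, h3, Matrix.cons_val] <;>
    field_simp <;> ring

lemma reachable_e1_add_e5 {u t : ℝ} (hu : 0 < u) (ht : 0 < t) :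
    Reachable ![u, 0, 0, 0, t] ![1, 0, 0, 0, 1] := by
  set d := √(u / t)
  have hd : 0 < d := Real.sqrt_pos.2 (div_pos hu ht)
  have hd2 : d ^ 2 * t = u := by rw [Real.sq_sqrt (div_pos hu ht).le]; field_simp
  have hdet : u⁻¹ * d - 0 * 0 ≠ 0 := by rw [mul_zero, sub_zero]; positivity
  convert reachable_glAct hdet _ using 1
  refine fin5_ext ?_ ?_ ?_ ?_ ?_ <;>
    simp only [glAct, Matrix.cons_val, mul_zero, zero_mul, add_zero, zero_add, sub_zero]
  · field_simp
  · rw [← hd2]; field_simp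

theorem open_orbit_normal_form_general (v : Fin 5 → ℝ)
    (h45 : ¬ (v 3 = 0 ∧ v 4 = 0))
    (hQ : 2 * v 0 * v 4 - 2 * v 1 * v 3 + (v 2)^2 > 0) :
    ∃ f ∈ Subgroup.closure P1gens, f v = ![1, 0, 0, 0, 1] := by
  obtain ⟨w, hvw, hw3, hw4, hQw⟩ := exists_reachable_coord3_eq_zero h45 hQ
  exact hvw.trans <| (reachable_of_coord3_eq_zero hw3 hw4.ne').trans <|
    reachable_e1_add_e5 (div_pos hQw (by positivity)) hw4

/-- Every nonzero v with (v₄,v₅) ≠ (0,0) and 2v₁v₅ − 2v₂v₄ + v₃² > 0 can be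
mapped to e₅ + e₁ = (1,0,0,0,1) by the group generated by the unipotent and
GL₂ actions. -/
theorem open_orbit_normal_form (v : Fin 5 → ℝ) (hv : v ≠ 0)
    (h45 : ¬ (v 3 = 0 ∧ v 4 = 0))
    (hQ : 2 * v 0 * v 4 - 2 * v 1 * v 3 + (v 2)^2 > 0) :
    ∃ f ∈ Subgroup.closure P1gens, f v = ![1, 0, 0, 0, 1] :=
  open_orbit_normal_form_general v h45 hQ
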